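/- Let p be a prime and let K = K_0 ⊂ K_1 ⊂ ⋯ ⊂ K_n be a sufficiently ramified tower of local fields of characteristic (0,p); assume moreover that K_n/K is Galois with Gal(K_n/K) cyclic of order p^n generated by σ, and that K_m is the fixed field of σ^{p^m} for each 0 ≤ m ≤ n. Let t = p^{−n}·tr_{K_n/K} and K_n^{t=0} = {x ∈ K_n : t(x) = 0}. Then the K-linear operator σ − 1 maps K_n^{t=0} bijectively onto itself, and for every y ∈ K_n^{t=0} the unique x ∈ K_n^{t=0} with σ(x) − x = y satisfies v(x) ≥ v(y) − 1 − 1/(p(p−1)). -/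

import Mathlib

/-- Data exhibiting `L` as a local field of characteristic `(0, p)`: a multiplicative
nonarchimedean absolute value `a` (representing the absolute valuation `v` via
`a x = c ^ v x` for a base `0 < c < 1`), a uniformizer `ϖ` generating the (discrete)
value group, residue characteristic `p` (`a p < 1`), completeness, and perfectness of
the residue field (surjectivity of the `p`-power map on residues). -/
structure LocalFieldData (p : ℕ) (L : Type*) [Field L] where
  a : L → ℝ
  a_zero : a 0 = 0
  a_pos : ∀ x : L, x ≠ 0 → 0 < a x
  a_mul : ∀ x y : L, a (x * y) = a x * a y
  a_add : ∀ x y : L, a (x + y) ≤ max (a x) (a y)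
  ϖ : L
  ϖ_pos : 0 < a ϖ
  ϖ_lt_one : a ϖ < 1
  disc : ∀ x : L, x ≠ 0 → ∃ k : ℤ, a x = a ϖ ^ k
  res_char : a (p : L) < 1
  complete : ∀ u : ℕ → L,
    (∀ ε : ℝ, 0 < ε → ∃ N : ℕ, ∀ m ≥ N, ∀ n ≥ N, a (u m - u n) < ε) →
    ∃ l : L, ∀ ε : ℝ, 0 < ε → ∃ N : ℕ, ∀ n ≥ N, a (u n - l) < ε
  perfect_res : ∀ x : L, a x ≤ 1 → ∃ y : L, a y ≤ 1 ∧ a (x - y ^ p) < 1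

/-- The normalized trace `t = p⁻ⁿ · tr_{K_n/K}` for a Galois extension `L = K_n` of `K`
whose Galois group is cyclic of order `pⁿ` generated by `σ`:
`t x = p⁻ⁿ ∑_{j < pⁿ} σʲ x`. -/
noncomputable def normTrace (p n : ℕ) {K L : Type*} [Field K] [Field L] [Algebra K L]
    (σ : L ≃ₐ[K] L) (x : L) : L :=
  ((p : L) ^ n)⁻¹ * ∑ j ∈ Finset.range (p ^ n), (σ ^ j) x

/-!
Let `t_m = p^{-(n-m)} tr_{K_n/K_m}` be the average over the powers of `σ^{p^m}`, so that
`t_n = id`, `t_0 = t` and `t_m = p⁻¹ tr_{K_{m+1}/K_m} ∘ t_{m+1}`. Multiplying by a power of a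
uniformizer of `K_m` turns the bound on the different into
`v(tr_{K_{m+1}/K_m} z) ≥ v(z) + 1 - p^{-(m+1)}`, so `t_m` lowers valuations by at most
`p^{-(m+1)}`. If `σ x - x = y`, then `t_{m+1} x - t_m x` is `p⁻¹` times a sum of the
`(σ^k - 1) t_{m+1} x`, which are sums of conjugates of `t_{m+1} y`; hence
`v(t_{m+1} x - t_m x) ≥ v(y) - 1 - ∑_{k = m+2}^{n} p^{-k}`. When `t x = 0`, `x` is the telescoping
sum of these differences, and `∑_{k ≥ 2} p^{-k} = 1/(p(p-1))`.

Bijectivity is elementary: `t ∘ (σ - 1) = 0`, `t` is the identity on `σ`-fixed elements, and by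
summation by parts `x₀ = p^{-n} ∑_j j σ^j y` satisfies `σ x₀ - x₀ = y` when `t y = 0`, and so
does `x₀ - t x₀`, which lies in the kernel of `t`.
-/

open Finset

namespace LocalFieldData

variable {p : ℕ} {L : Type*} [Field L] (D : LocalFieldData p L)

lemma a_nonneg (x : L) : 0 ≤ D.a x := by
  rcases eq_or_ne x 0 with rfl | hx
  exacts [D.a_zero.ge, (D.a_pos x hx).le]

def abv : AbsoluteValue L ℝ where
  toFun := D.a
  map_mul' := D.a_mul
  nonneg' := D.a_nonneg
  eq_zero' x := ⟨fun h => by_contra fun hx => (D.a_pos x hx).ne' h, fun h => h ▸ D.a_zero⟩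
  add_le' x y := (D.a_add x y).trans (max_le_add_of_nonneg (D.a_nonneg x) (D.a_nonneg y))

lemma a_one : D.a 1 = 1 := map_one D.abv

lemma a_zpow (x : L) (k : ℤ) : D.a (x ^ k) = D.a x ^ k := map_zpow₀ D.abv x k

lemma a_sub_comm (x y : L) : D.a (x - y) = D.a (y - x) := D.abv.map_sub x y

lemma a_sum_le {ι : Type*} {s : Finset ι} {f : ι → L} {C : ℝ} (hC : 0 ≤ C)
    (h : ∀ i ∈ s, D.a (f i) ≤ C) : D.a (∑ i ∈ s, f i) ≤ C :=
  sum_induction f (fun z => D.a z ≤ C) (fun _ _ ha hb => (D.a_add _ _).trans (max_le ha hb))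
    (D.a_zero.trans_le hC) h

end LocalFieldData

lemma Finset.sum_range_mul {M : Type*} [AddCommMonoid M] (f : ℕ → M) (a b : ℕ) :
    ∑ k ∈ range (a * b), f k = ∑ i ∈ range a, ∑ j ∈ range b, f (i + a * j) := by
  induction b with
  | zero => simp
  | succ b ih =>
    rw [Nat.mul_succ, sum_range_add, ih]
    simp only [sum_range_succ, sum_add_distrib, add_comm (a * b)]

section CyclicAverage

variable {K L : Type*} [Field K] [Field L] [Algebra K L]

noncomputable def cyclicAverage (N : ℕ) (τ : L ≃ₐ[K] L) : L →+ L :=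
  AddMonoidHom.mk' (fun x => (N : L)⁻¹ * ∑ j ∈ range N, (τ ^ j) x)
    (fun x y => by simp only [map_add, sum_add_distrib, mul_add])

variable {N : ℕ} {τ : L ≃ₐ[K] L}

lemma cyclicAverage_apply (x : L) :
    cyclicAverage N τ x = (N : L)⁻¹ * ∑ j ∈ range N, (τ ^ j) x := rfl

lemma normTrace_eq_cyclicAverage (p n : ℕ) (σ : L ≃ₐ[K] L) (x : L) :
    normTrace p n σ x = cyclicAverage (p ^ n) σ x := by
  rw [normTrace, cyclicAverage_apply, Nat.cast_pow]

lemma cyclicAverage_one (x : L) : cyclicAverage 1 τ x = x := by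
  simp [cyclicAverage_apply]

lemma cyclicAverage_mul (a b : ℕ) (τ : L ≃ₐ[K] L) (x : L) :
    cyclicAverage (a * b) τ x = cyclicAverage a τ (cyclicAverage b (τ ^ a) x) := by
  simp only [cyclicAverage_apply, map_mul, map_inv₀, map_natCast, map_sum, mul_sum,
    ← AlgEquiv.mul_apply, ← pow_mul, ← pow_add, sum_range_mul, Nat.cast_mul, mul_inv, mul_assoc]
  exact sum_comm

lemma cyclicAverage_mul_natCast (hN : (N : L) ≠ 0) (x : L) :
    cyclicAverage N τ x * N = ∑ j ∈ range N, (τ ^ j) x := by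
  rw [cyclicAverage_apply, mul_comm, mul_inv_cancel_left₀ hN]

lemma cyclicAverage_commute {ρ : L ≃ₐ[K] L} (h : Commute ρ τ) (x : L) :
    cyclicAverage N τ (ρ x) = ρ (cyclicAverage N τ x) := by
  simp only [cyclicAverage_apply, map_mul, map_inv₀, map_natCast, map_sum]
  congr 1
  refine sum_congr rfl fun j _ => ?_
  rw [← AlgEquiv.mul_apply, ← AlgEquiv.mul_apply, (h.pow_right j).eq]

lemma pow_apply_of_apply_eq {x : L} (hx : τ x = x) (j : ℕ) : (τ ^ j) x = x := by
  rw [AlgEquiv.coe_pow]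
  exact Function.IsFixedPt.iterate hx j

lemma sum_range_pow_succ_apply (hτ : τ ^ N = 1) (x : L) :
    ∑ j ∈ range N, (τ ^ (j + 1)) x = ∑ j ∈ range N, (τ ^ j) x := by
  have h := (sum_range_succ' (fun j => (τ ^ j) x) N).symm.trans (sum_range_succ _ N)
  rw [hτ, pow_zero] at h
  exact add_right_cancel h

lemma apply_cyclicAverage (hτ : τ ^ N = 1) (x : L) :
    τ (cyclicAverage N τ x) = cyclicAverage N τ x := by
  simp only [cyclicAverage_apply, map_mul, map_inv₀, map_natCast, map_sum]
  rw [← sum_range_pow_succ_apply hτ]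
  simp only [pow_succ', AlgEquiv.mul_apply]

lemma cyclicAverage_of_apply_eq (hN : (N : L) ≠ 0) {x : L} (hx : τ x = x) :
    cyclicAverage N τ x = x := by
  rw [cyclicAverage_apply, sum_congr rfl fun j _ => pow_apply_of_apply_eq hx j, sum_const,
    card_range, nsmul_eq_mul, inv_mul_cancel_left₀ hN]

lemma cyclicAverage_apply_sub_self (hτ : τ ^ N = 1) (x : L) :
    cyclicAverage N τ (τ x - x) = 0 := by
  rw [map_sub, cyclicAverage_commute (Commute.refl τ), apply_cyclicAverage hτ, sub_self]

lemma existsUnique_apply_sub_self_eq (hτ : τ ^ N = 1) (hN : (N : L) ≠ 0) {y : L}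
    (hy : cyclicAverage N τ y = 0) : ∃! x, cyclicAverage N τ x = 0 ∧ τ x - x = y := by
  set x₀ := (N : L)⁻¹ * ∑ j ∈ range N, (j : L) * (τ ^ j) y
  have htel : ∑ j ∈ range N, (j : L) * ((τ ^ (j + 1)) y - (τ ^ j) y) = N * y := by
    have h := sum_range_sub (fun j => (j : L) * (τ ^ j) y) N
    simpa only [Nat.cast_succ, hτ, pow_zero, AlgEquiv.one_apply, Nat.cast_zero, zero_mul,
      sub_zero, add_mul, one_mul, add_sub_right_comm, sum_add_distrib, mul_sub,
      sum_range_pow_succ_apply hτ, ← cyclicAverage_mul_natCast hN, hy, add_zero] using h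
  have hx₀ : τ x₀ - x₀ = y := by
    calc τ x₀ - x₀ = (N : L)⁻¹ * ∑ j ∈ range N, (j : L) * ((τ ^ (j + 1)) y - (τ ^ j) y) := by
          simp only [x₀, map_mul, map_inv₀, map_natCast, map_sum, pow_succ', AlgEquiv.mul_apply,
            mul_sub, sum_sub_distrib]
      _ = y := by rw [htel, inv_mul_cancel_left₀ hN]
  set x := x₀ - cyclicAverage N τ x₀
  have hx : cyclicAverage N τ x = 0 := by
    rw [map_sub, cyclicAverage_of_apply_eq hN (apply_cyclicAverage hτ x₀), sub_self]
  have hxy : τ x - x = y := by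
    rw [map_sub, apply_cyclicAverage hτ, sub_sub_sub_cancel_right, hx₀]
  refine ⟨x, ⟨hx, hxy⟩, fun x' ⟨hx', hx'y⟩ => sub_eq_zero.mp ?_⟩
  have hfix : τ (x' - x) = x' - x := by
    rw [map_sub]
    linear_combination hx'y - hxy
  rw [← cyclicAverage_of_apply_eq hN hfix, map_sub, hx', hx, sub_zero]

end CyclicAverage

namespace LocalFieldData

variable {p : ℕ} {K L : Type*} [Field K] [Field L] [Algebra K L] (D : LocalFieldData p L)
  {σ : L ≃ₐ[K] L}

lemma a_pow_apply (hσ : ∀ x, D.a (σ x) = D.a x) (k : ℕ) (x : L) : D.a ((σ ^ k) x) = D.a x := by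
  induction k with
  | zero => rfl
  | succ k ih => rw [pow_succ', AlgEquiv.mul_apply, hσ, ih]

lemma a_pow_apply_sub_self_le (hσ : ∀ x, D.a (σ x) = D.a x) (k : ℕ) (u : L) :
    D.a ((σ ^ k) u - u) ≤ D.a (σ u - u) := by
  have htel : ∑ i ∈ range k, (σ ^ i) (σ u - u) = (σ ^ k) u - u := by
    simpa only [map_sub, ← AlgEquiv.mul_apply, ← pow_succ, pow_zero, AlgEquiv.one_apply]
      using sum_range_sub (fun i => (σ ^ i) u) k
  rw [← htel]
  exact D.a_sum_le (D.a_nonneg _) fun i _ => (D.a_pow_apply hσ i _).le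

lemma a_sub_cyclicAverage_mul_le (hσ : ∀ x, D.a (σ x) = D.a x) {N : ℕ} (hN : (N : L) ≠ 0)
    (k : ℕ) (u : L) : D.a (u - cyclicAverage N (σ ^ k) u) * D.a (N : L) ≤ D.a (σ u - u) := by
  have hsplit : (u - cyclicAverage N (σ ^ k) u) * N = ∑ j ∈ range N, (u - (σ ^ (k * j)) u) := by
    rw [sub_mul, cyclicAverage_mul_natCast hN, sum_sub_distrib, sum_const, card_range,
      nsmul_eq_mul, mul_comm (u : L)]
    simp only [pow_mul]
  rw [← D.a_mul, hsplit]
  refine D.a_sum_le (D.a_nonneg _) fun j _ => ?_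
  rw [D.a_sub_comm]
  exact D.a_pow_apply_sub_self_le hσ _ u

end LocalFieldData

section PartialTrace

variable {p n : ℕ} {K L : Type*} [Field K] [Field L] [Algebra K L]

noncomputable def partialTrace (p n : ℕ) (σ : L ≃ₐ[K] L) (m : ℕ) : L →+ L :=
  cyclicAverage (p ^ (n - m)) (σ ^ p ^ m)

variable {σ : L ≃ₐ[K] L}

lemma partialTrace_self (x : L) : partialTrace p n σ n x = x := by
  rw [partialTrace, Nat.sub_self, pow_zero, cyclicAverage_one]

lemma partialTrace_zero (x : L) : partialTrace p n σ 0 x = cyclicAverage (p ^ n) σ x := by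
  rw [partialTrace, Nat.sub_zero, pow_zero, pow_one]

lemma partialTrace_eq_cyclicAverage_succ {m : ℕ} (hm : m < n) (x : L) :
    partialTrace p n σ m x = cyclicAverage p (σ ^ p ^ m) (partialTrace p n σ (m + 1) x) := by
  have hexp : p ^ (n - m) = p * p ^ (n - (m + 1)) := by
    rw [← pow_succ']
    congr 1
    omega
  rw [partialTrace, partialTrace, hexp, cyclicAverage_mul, ← pow_mul, ← pow_succ]

lemma apply_partialTrace (hσ : σ ^ p ^ n = 1) {m : ℕ} (hm : m ≤ n) (x : L) :
    (σ ^ p ^ m) (partialTrace p n σ m x) = partialTrace p n σ m x := by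
  refine apply_cyclicAverage ?_ x
  rw [← pow_mul, ← pow_add, Nat.add_sub_cancel' hm, hσ]

lemma partialTrace_apply_sub_self (m : ℕ) (x : L) :
    σ (partialTrace p n σ m x) - partialTrace p n σ m x = partialTrace p n σ m (σ x - x) := by
  rw [map_sub, partialTrace, cyclicAverage_commute (Commute.self_pow σ _)]

end PartialTrace

structure IsSufficientlyRamifiedTower (p n : ℕ) {K L : Type*} [Field K] [Field L] [Algebra K L]
    (σ : L ≃ₐ[K] L) (D : LocalFieldData p L) (ϖ : ℕ → L) (e : ℕ) : Prop where
  uniformizer_fixed : ∀ m ≤ n, (σ ^ p ^ m) (ϖ m) = ϖ m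
  uniformizer_pos : ∀ m ≤ n, 0 < D.a (ϖ m)
  uniformizer_lt_one : ∀ m ≤ n, D.a (ϖ m) < 1
  value_group : ∀ m ≤ n, ∀ x : L, (σ ^ p ^ m) x = x → x ≠ 0 → ∃ k : ℤ, D.a x = D.a (ϖ m) ^ k
  a_natCast : D.a (p : L) = D.a (ϖ 0) ^ e
  totally_ramified : ∀ m : ℕ, 1 ≤ m → m ≤ n → D.a (ϖ (m - 1)) = D.a (ϖ m) ^ p
  -- `dd` is `v_{K_m}(𝒟_{K_m/K_{m-1}})`: the inverse different is `{x | tr (x 𝒪) ⊆ 𝒪}`.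
  different : ∀ m : ℕ, 1 ≤ m → m ≤ n → ∃ dd : ℕ,
    ((e : ℝ) * ((p : ℝ) ^ m - 1) + ((p : ℝ) - 1) ≤ (dd : ℝ)) ∧
    ∀ x : L, (σ ^ p ^ m) x = x →
      ((∀ y : L, (σ ^ p ^ m) y = y → D.a y ≤ 1 →
          D.a (∑ j ∈ Finset.range p, (σ ^ (p ^ (m - 1) * j)) (x * y)) ≤ 1) ↔
        D.a x ≤ D.a (ϖ m) ^ (-(dd : ℤ)))

namespace IsSufficientlyRamifiedTower

variable {p n e : ℕ} {K L : Type*} [Field K] [Field L] [Algebra K L] {σ : L ≃ₐ[K] L}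
  {D : LocalFieldData p L} {ϖ : ℕ → L}

lemma a_uniformizer (T : IsSufficientlyRamifiedTower p n σ D ϖ e) {m : ℕ} (hm : m ≤ n) :
    D.a (ϖ m) = D.a (ϖ n) ^ p ^ (n - m) := by
  induction hm using Nat.decreasingInduction with
  | self => rw [Nat.sub_self, pow_zero, pow_one]
  | of_succ k hk ih =>
    have htot := T.totally_ramified (k + 1) (by omega) hk
    rw [Nat.add_sub_cancel] at htot
    rw [htot, ih, ← pow_mul, ← pow_succ]
    congr 2
    omega

lemma a_natCast_eq (T : IsSufficientlyRamifiedTower p n σ D ϖ e) {m : ℕ} (hm : m ≤ n) :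
    D.a (p : L) = D.a (ϖ m) ^ (e * p ^ m) := by
  rw [T.a_natCast, T.a_uniformizer (Nat.zero_le n), T.a_uniformizer hm, ← pow_mul, ← pow_mul,
    Nat.sub_zero, mul_left_comm, ← pow_add, Nat.sub_add_cancel hm, mul_comm]

lemma a_natCast_pos (T : IsSufficientlyRamifiedTower p n σ D ϖ e) : 0 < D.a (p : L) :=
  T.a_natCast ▸ pow_pos (T.uniformizer_pos 0 (Nat.zero_le n)) e

lemma natCast_ne_zero (T : IsSufficientlyRamifiedTower p n σ D ϖ e) : (p : L) ≠ 0 :=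
  fun h => T.a_natCast_pos.ne' (by rw [h, D.a_zero])

theorem a_trace_le (T : IsSufficientlyRamifiedTower p n σ D ϖ e) (hp : 0 < p) {m : ℕ} (hm : m < n)
    {z : L} (hz : (σ ^ p ^ (m + 1)) z = z) :
    D.a (∑ j ∈ range p, ((σ ^ p ^ m) ^ j) z)
      ≤ D.a (ϖ (m + 1)) ^ ((e : ℤ) * (p ^ (m + 1) - 1)) * D.a z := by
  rcases eq_or_ne z 0 with rfl | hz0
  · simp only [map_zero, sum_const_zero, D.a_zero, mul_zero, le_refl]
  set b := D.a (ϖ (m + 1))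
  have hb0 : 0 < b := T.uniformizer_pos _ hm
  have hb1 : b < 1 := T.uniformizer_lt_one _ hm
  obtain ⟨k, hk⟩ := T.value_group (m + 1) hm z hz hz0
  obtain ⟨dd, hdd, hdual⟩ := T.different (m + 1) (by omega) hm
  simp only [Nat.add_sub_cancel, pow_mul] at hdual
  have hdd' : (e : ℤ) * (p ^ (m + 1) - 1) + (p - 1) ≤ dd := by exact_mod_cast hdd
  have hw0 : ϖ m ≠ 0 := fun h => (T.uniformizer_pos m hm.le).ne' (by rw [h, D.a_zero])
  set w := ϖ m
  have hw : (σ ^ p ^ m) w = w := T.uniformizer_fixed m hm.le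
  have haw : D.a w = b ^ p := by simpa using T.totally_ramified (m + 1) (by omega) hm
  -- `w ^ s` passes through the trace, and `s = ⌊(k + dd) / p⌋` is the largest shift that puts
  -- `z * w ^ (-s)` into the inverse different.
  set s := (k + dd) / (p : ℤ)
  have hs_le : s * p ≤ k + dd := Int.ediv_mul_le _ (by exact_mod_cast hp.ne')
  have hs_gt : k + dd < (s + 1) * p := Int.lt_ediv_add_one_mul_self _ (by exact_mod_cast hp)
  set z' := z * w ^ (-s)
  have hz' : (σ ^ p ^ (m + 1)) z' = z' := by
    rw [map_mul, map_zpow₀, hz, pow_succ, pow_mul, pow_apply_of_apply_eq hw]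
  have hmem : D.a z' ≤ b ^ (-(dd : ℤ)) := by
    rw [D.a_mul, D.a_zpow, haw, hk, ← zpow_natCast, ← zpow_mul, ← zpow_add₀ hb0.ne',
      zpow_le_zpow_iff_right_of_lt_one₀ hb0 hb1]
    linarith
  have htr : D.a (∑ j ∈ range p, ((σ ^ p ^ m) ^ j) z') ≤ 1 := by
    simpa using (hdual z' hz').2 hmem 1 (map_one _) D.a_one.le
  have hsum : ∑ j ∈ range p, ((σ ^ p ^ m) ^ j) z
      = (∑ j ∈ range p, ((σ ^ p ^ m) ^ j) z') * w ^ s := by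
    rw [sum_mul]
    refine sum_congr rfl fun j _ => ?_
    rw [map_mul, map_zpow₀, pow_apply_of_apply_eq hw, mul_assoc, ← zpow_add₀ hw0,
      neg_add_cancel, zpow_zero, mul_one]
  calc D.a (∑ j ∈ range p, ((σ ^ p ^ m) ^ j) z) ≤ D.a (w ^ s) := by
        rw [hsum, D.a_mul]
        exact mul_le_of_le_one_left (D.a_nonneg _) htr
    _ = b ^ (s * p) := by rw [D.a_zpow, haw, ← zpow_natCast, ← zpow_mul, mul_comm]
    _ ≤ b ^ ((e : ℤ) * (p ^ (m + 1) - 1) + k) :=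
        zpow_le_zpow_right_of_le_one₀ hb0 hb1.le (by linarith)
    _ = b ^ ((e : ℤ) * (p ^ (m + 1) - 1)) * D.a z := by rw [zpow_add₀ hb0.ne', hk]

theorem a_cyclicAverage_mul_le (T : IsSufficientlyRamifiedTower p n σ D ϖ e) (hp : 0 < p)
    {m : ℕ} (hm : m < n) {z : L} (hz : (σ ^ p ^ (m + 1)) z = z) :
    D.a (cyclicAverage p (σ ^ p ^ m) z) * D.a (ϖ (m + 1)) ^ e ≤ D.a z := by
  set b := D.a (ϖ (m + 1))
  have hb0 : 0 < b := T.uniformizer_pos _ hm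
  have hsplit : D.a (p : L) = b ^ ((e : ℤ) * (p ^ (m + 1) - 1)) * b ^ e := by
    rw [T.a_natCast_eq (m := m + 1) hm, ← zpow_natCast, ← zpow_natCast, ← zpow_add₀ hb0.ne']
    congr 1
    push_cast
    ring
  have htr := T.a_trace_le hp hm hz
  rw [← cyclicAverage_mul_natCast T.natCast_ne_zero, D.a_mul, hsplit, mul_left_comm] at htr
  exact le_of_mul_le_mul_left htr (zpow_pos hb0 _)

theorem a_partialTrace_mul_le (T : IsSufficientlyRamifiedTower p n σ D ϖ e) (hp : 0 < p)
    (hσ : σ ^ p ^ n = 1) {m : ℕ} (hm : m ≤ n) (x : L) :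
    D.a (partialTrace p n σ m x) * D.a (ϖ n) ^ (e * ∑ i ∈ range (n - m), p ^ i) ≤ D.a x := by
  induction hm using Nat.decreasingInduction with
  | self => simp [partialTrace_self]
  | of_succ k hk ih =>
    have hstep := T.a_cyclicAverage_mul_le hp hk (apply_partialTrace hσ hk x)
    rw [← partialTrace_eq_cyclicAverage_succ hk] at hstep
    rw [show n - k = n - (k + 1) + 1 by omega, sum_range_succ, mul_add, pow_add,
      pow_mul' _ e (p ^ _), ← T.a_uniformizer (m := k + 1) hk]
    calc D.a (partialTrace p n σ k x)
          * (D.a (ϖ n) ^ (e * ∑ i ∈ range (n - (k + 1)), p ^ i) * D.a (ϖ (k + 1)) ^ e)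
        = D.a (partialTrace p n σ k x) * D.a (ϖ (k + 1)) ^ e
          * D.a (ϖ n) ^ (e * ∑ i ∈ range (n - (k + 1)), p ^ i) := by ring
      _ ≤ D.a (partialTrace p n σ (k + 1) x)
          * D.a (ϖ n) ^ (e * ∑ i ∈ range (n - (k + 1)), p ^ i) :=
        mul_le_mul_of_nonneg_right hstep (pow_nonneg (D.a_nonneg _) _)
      _ ≤ D.a x := ih

theorem a_partialTrace_succ_sub_mul_le (T : IsSufficientlyRamifiedTower p n σ D ϖ e)
    (hp : 0 < p) (hσ : σ ^ p ^ n = 1) (hinv : ∀ x, D.a (σ x) = D.a x) {m : ℕ} (hm : m < n)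
    (x : L) :
    D.a (partialTrace p n σ (m + 1) x - partialTrace p n σ m x)
        * (D.a (p : L) * D.a (ϖ n) ^ (e * ∑ i ∈ range (n - (m + 1)), p ^ i))
      ≤ D.a (σ x - x) := by
  set u := partialTrace p n σ (m + 1) x
  rw [partialTrace_eq_cyclicAverage_succ hm, ← mul_assoc]
  calc D.a (u - cyclicAverage p (σ ^ p ^ m) u) * D.a (p : L)
        * D.a (ϖ n) ^ (e * ∑ i ∈ range (n - (m + 1)), p ^ i)
      ≤ D.a (σ u - u) * D.a (ϖ n) ^ (e * ∑ i ∈ range (n - (m + 1)), p ^ i) :=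
        mul_le_mul_of_nonneg_right (D.a_sub_cyclicAverage_mul_le hinv T.natCast_ne_zero _ u)
          (pow_nonneg (D.a_nonneg _) _)
    _ = D.a (partialTrace p n σ (m + 1) (σ x - x))
          * D.a (ϖ n) ^ (e * ∑ i ∈ range (n - (m + 1)), p ^ i) := by
        rw [partialTrace_apply_sub_self]
    _ ≤ D.a (σ x - x) := T.a_partialTrace_mul_le hp hσ hm _

theorem rpow_le_a_natCast_mul (T : IsSufficientlyRamifiedTower p n σ D ϖ e) (hp : p.Prime)
    {k : ℕ} (hk : k < n) :
    D.a (p : L) ^ (1 + ((p : ℝ) * ((p : ℝ) - 1))⁻¹)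
      ≤ D.a (p : L) * D.a (ϖ n) ^ (e * ∑ i ∈ range k, p ^ i) := by
  set q := D.a (ϖ n)
  have hq0 : 0 < q := T.uniformizer_pos n le_rfl
  have hq1 : q < 1 := T.uniformizer_lt_one n le_rfl
  have hp2 : (2 : ℝ) ≤ p := by exact_mod_cast hp.two_le
  rw [Real.rpow_add T.a_natCast_pos, Real.rpow_one]
  refine mul_le_mul_of_nonneg_left ?_ (D.a_nonneg _)
  rw [T.a_natCast_eq le_rfl, ← Real.rpow_natCast, ← Real.rpow_mul hq0.le, ← Real.rpow_natCast]
  refine Real.rpow_le_rpow_of_exponent_ge hq0 hq1.le ?_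
  rw [← div_eq_mul_inv, le_div_iff₀ (by nlinarith)]
  push_cast
  calc (e * ∑ i ∈ range k, (p : ℝ) ^ i) * ((p : ℝ) * ((p : ℝ) - 1))
      = e * (p * ((∑ i ∈ range k, (p : ℝ) ^ i) * ((p : ℝ) - 1))) := by ring
    _ = e * (p ^ (k + 1) - p) := by rw [geom_sum_mul, pow_succ']; ring
    _ ≤ e * p ^ n := by
        gcongr
        calc (p : ℝ) ^ (k + 1) - p ≤ p ^ (k + 1) := by linarith
          _ ≤ p ^ n := pow_le_pow_right₀ (by linarith) hk

theorem a_le_of_cyclicAverage_eq_zero (T : IsSufficientlyRamifiedTower p n σ D ϖ e)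
    (hp : p.Prime) (hσ : σ ^ p ^ n = 1) (hinv : ∀ x, D.a (σ x) = D.a x) {x : L}
    (hx : cyclicAverage (p ^ n) σ x = 0) :
    D.a x ≤ D.a (p : L) ^ (-(1 + ((p : ℝ) * ((p : ℝ) - 1))⁻¹)) * D.a (σ x - x) := by
  set C := D.a (p : L) ^ (-(1 + ((p : ℝ) * ((p : ℝ) - 1))⁻¹)) * D.a (σ x - x) with hC
  have hterm : ∀ m < n, D.a (partialTrace p n σ (m + 1) x - partialTrace p n σ m x) ≤ C := by
    intro m hm
    have hpos : 0 < D.a (p : L) * D.a (ϖ n) ^ (e * ∑ i ∈ range (n - (m + 1)), p ^ i) :=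
      mul_pos T.a_natCast_pos (pow_pos (T.uniformizer_pos n le_rfl) _)
    calc D.a (partialTrace p n σ (m + 1) x - partialTrace p n σ m x)
        ≤ D.a (σ x - x) / (D.a (p : L) * D.a (ϖ n) ^ (e * ∑ i ∈ range (n - (m + 1)), p ^ i)) :=
          (le_div_iff₀ hpos).2 (T.a_partialTrace_succ_sub_mul_le hp.pos hσ hinv hm x)
      _ ≤ D.a (σ x - x) / D.a (p : L) ^ (1 + ((p : ℝ) * ((p : ℝ) - 1))⁻¹) :=
          div_le_div_of_nonneg_left (D.a_nonneg _) (Real.rpow_pos_of_pos T.a_natCast_pos _)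
            (T.rpow_le_a_natCast_mul hp (by omega))
      _ = C := by rw [hC, Real.rpow_neg (D.a_nonneg _), div_eq_inv_mul]
  calc D.a x = D.a (∑ m ∈ range n, (partialTrace p n σ (m + 1) x - partialTrace p n σ m x)) := by
        rw [sum_range_sub (fun m => partialTrace p n σ m x), partialTrace_self, partialTrace_zero,
          hx, sub_zero]
    _ ≤ C := D.a_sum_le (mul_nonneg (Real.rpow_nonneg (D.a_nonneg _) _) (D.a_nonneg _))
        fun m hm => hterm m (mem_range.mp hm)

end IsSufficientlyRamifiedTower

theorem sigma_sub_one_bijective_on_trace_zero_general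
    (p n : ℕ) (hp : p.Prime)
    (K L : Type*) [Field K] [Field L] [Algebra K L]
    (σ : L ≃ₐ[K] L) (hσ : orderOf σ = p ^ n)
    (D : LocalFieldData p L)
    (hinv : ∀ x : L, D.a (σ x) = D.a x)
    (ϖ : ℕ → L)
    (hϖmem : ∀ m ≤ n, (σ ^ p ^ m) (ϖ m) = ϖ m)
    (hϖpos : ∀ m ≤ n, 0 < D.a (ϖ m))
    (hϖ1 : ∀ m ≤ n, D.a (ϖ m) < 1)
    (hdisc : ∀ m ≤ n, ∀ x : L, (σ ^ p ^ m) x = x → x ≠ 0 → ∃ k : ℤ, D.a x = D.a (ϖ m) ^ k)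
    (e : ℕ) (he : D.a ((p : L)) = D.a (ϖ 0) ^ e)
    (htot : ∀ m : ℕ, 1 ≤ m → m ≤ n → D.a (ϖ (m - 1)) = D.a (ϖ m) ^ p)
    (hdiff : ∀ m : ℕ, 1 ≤ m → m ≤ n → ∃ dd : ℕ,
      ((e : ℝ) * ((p : ℝ) ^ m - 1) + ((p : ℝ) - 1) ≤ (dd : ℝ)) ∧
      ∀ x : L, (σ ^ p ^ m) x = x →
        ((∀ y : L, (σ ^ p ^ m) y = y → D.a y ≤ 1 →
            D.a (∑ j ∈ Finset.range p, (σ ^ (p ^ (m - 1) * j)) (x * y)) ≤ 1) ↔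
          D.a x ≤ D.a (ϖ m) ^ (-(dd : ℤ)))) :
    (∀ x : L, normTrace p n σ x = 0 → normTrace p n σ (σ x - x) = 0) ∧
      (∀ y : L, normTrace p n σ y = 0 →
        ∃! x : L, normTrace p n σ x = 0 ∧ σ x - x = y) ∧
      (∀ x y : L, normTrace p n σ x = 0 → normTrace p n σ y = 0 → σ x - x = y →
        D.a x ≤ D.a ((p : L)) ^ (-(1 + ((p : ℝ) * ((p : ℝ) - 1))⁻¹)) * D.a y) := by
  have T : IsSufficientlyRamifiedTower p n σ D ϖ e := ⟨hϖmem, hϖpos, hϖ1, hdisc, he, htot, hdiff⟩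
  have hσn : σ ^ p ^ n = 1 := hσ ▸ pow_orderOf_eq_one σ
  have hN : ((p ^ n : ℕ) : L) ≠ 0 := by
    rw [Nat.cast_pow]
    exact pow_ne_zero n T.natCast_ne_zero
  simp only [normTrace_eq_cyclicAverage]
  refine ⟨fun x _ => cyclicAverage_apply_sub_self hσn x,
    fun y hy => existsUnique_apply_sub_self_eq hσn hN hy, ?_⟩
  rintro x y hx - rfl
  exact T.a_le_of_cyclicAverage_eq_zero hp hσn hinv hx

/-- With `K = K_0 ⊂ ⋯ ⊂ K_n = L` a sufficiently ramified tower of local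
fields of characteristic `(0,p)`, `Gal(K_n/K)` cyclic of order `pⁿ` generated by `σ`,
`K_m` the fixed field of `σ^(p^m)`, `t = p⁻ⁿ tr_{K_n/K}` the normalized trace, and
`K_n^{t=0} = {x : t x = 0}`:  the `K`-linear operator `σ - 1` maps `K_n^{t=0}`
bijectively onto itself, and the unique solution `x ∈ K_n^{t=0}` of `σ x - x = y`
(for `y ∈ K_n^{t=0}`) satisfies `v(x) ≥ v(y) - 1 - 1/(p(p-1))`, i.e.
`|x| ≤ |p| ^ (-(1 + 1/(p(p-1)))) * |y|`. -/
theorem sigma_sub_one_bijective_on_trace_zero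
    (p n : ℕ) (hp : p.Prime) (hn : 1 ≤ n)
    (K L : Type*) [Field K] [Field L] [CharZero K] [CharZero L] [Algebra K L]
    [IsGalois K L] [FiniteDimensional K L]
    (hdeg : Module.finrank K L = p ^ n)
    (σ : L ≃ₐ[K] L) (hσ : orderOf σ = p ^ n)
    (D : LocalFieldData p L)
    (hinv : ∀ x : L, D.a (σ x) = D.a x)
    (ϖ : ℕ → L)
    (hϖmem : ∀ m ≤ n, (σ ^ p ^ m) (ϖ m) = ϖ m)
    (hϖpos : ∀ m ≤ n, 0 < D.a (ϖ m))
    (hϖ1 : ∀ m ≤ n, D.a (ϖ m) < 1)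
    (hdisc : ∀ m ≤ n, ∀ x : L, (σ ^ p ^ m) x = x → x ≠ 0 → ∃ k : ℤ, D.a x = D.a (ϖ m) ^ k)
    (e : ℕ) (he1 : 1 ≤ e) (he : D.a ((p : L)) = D.a (ϖ 0) ^ e)
    (htot : ∀ m : ℕ, 1 ≤ m → m ≤ n → D.a (ϖ (m - 1)) = D.a (ϖ m) ^ p)
    (hdiff : ∀ m : ℕ, 1 ≤ m → m ≤ n → ∃ dd : ℕ,
      ((e : ℝ) * ((p : ℝ) ^ m - 1) + ((p : ℝ) - 1) ≤ (dd : ℝ)) ∧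
      ∀ x : L, (σ ^ p ^ m) x = x →
        ((∀ y : L, (σ ^ p ^ m) y = y → D.a y ≤ 1 →
            D.a (∑ j ∈ Finset.range p, (σ ^ (p ^ (m - 1) * j)) (x * y)) ≤ 1) ↔
          D.a x ≤ D.a (ϖ m) ^ (-(dd : ℤ)))) :
    (∀ x : L, normTrace p n σ x = 0 → normTrace p n σ (σ x - x) = 0) ∧
      (∀ y : L, normTrace p n σ y = 0 →
        ∃! x : L, normTrace p n σ x = 0 ∧ σ x - x = y) ∧
      (∀ x y : L, normTrace p n σ x = 0 → normTrace p n σ y = 0 → σ x - x = y →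
        D.a x ≤ D.a ((p : L)) ^ (-(1 + ((p : ℝ) * ((p : ℝ) - 1))⁻¹)) * D.a y) :=
  sigma_sub_one_bijective_on_trace_zero_general p n hp K L σ hσ D hinv ϖ hϖmem hϖpos hϖ1 hdisc e he
    htot hdiff
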